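/- Let B = e^{-iκx̂₁} g(x̂₂) act on L²(ℝ²) = L²(ℝ) ⊗ L²(ℝ), where g is a bounded real-valued function of the second coordinate. Then for the dissipator 𝓛_B[ρ] = BρB† − ½{B†B, ρ}: (i) Tr(x̂₂ 𝓛_B[ρ]) = 0 and Tr(p̂₂ 𝓛_B[ρ]) = 0 for all density operators ρ (the target's first moments are unaffected); (ii) Tr(p̂₁ 𝓛_B[ρ]) = −ℏκ Tr(g(x̂₂)² ρ) (the controller feels a statistical force). -/

import Mathlib

/-!
Both jump operators act by multiplication: `B` by `b = e^{-iκx₁} g(x₂)` and `B†` by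
`a = e^{iκx₁} g(x₂)`. A multiplication operator such as `x̂₂` commutes with them, so the
dissipator annihilates it. For a derivation `D = c ∂`, the Leibniz rule leaves only
`𝓛ᵀ[D] = (c/2)(a ∂b − b ∂a)`. Along `x₂` the phases cancel and `a ∂₂b − b ∂₂a = g g' − g' g = 0`;
along `x₁` the phase gives `∂₁b = −iκ b` and `∂₁a = iκ a`, hence `a ∂₁b − b ∂₁a = −2iκ g²`
and `𝓛ᵀ[p̂₁] = −ℏκ g²`.
-/

noncomputable section

/-- B = e^{-iκx̂₁} g(x̂₂), acting on two-particle wavefunctions. -/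
def jumpB (κ : ℝ) (g : ℝ → ℝ) (ψ : ℝ → ℝ → ℂ) : ℝ → ℝ → ℂ :=
  fun x y => Complex.exp (-Complex.I * κ * x) * (g y : ℂ) * ψ x y

/-- B†. -/
def jumpBdag (κ : ℝ) (g : ℝ → ℝ) (ψ : ℝ → ℝ → ℂ) : ℝ → ℝ → ℂ :=
  fun x y => Complex.exp (Complex.I * κ * x) * (g y : ℂ) * ψ x y

/-- x̂₂: multiplication by the second coordinate. -/
def posOp2 (ψ : ℝ → ℝ → ℂ) : ℝ → ℝ → ℂ := fun x y => (y : ℂ) * ψ x y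

/-- p̂₁ = −iℏ ∂/∂x₁. -/
def momOp1 (ℏ : ℝ) (ψ : ℝ → ℝ → ℂ) : ℝ → ℝ → ℂ :=
  fun x y => -Complex.I * ℏ * deriv (fun t => ψ t y) x

/-- p̂₂ = −iℏ ∂/∂x₂. -/
def momOp2 (ℏ : ℝ) (ψ : ℝ → ℝ → ℂ) : ℝ → ℝ → ℂ :=
  fun x y => -Complex.I * ℏ * deriv (fun t => ψ x t) y

/-- Heisenberg form 𝓛ᵀ_B[h] = B†hB − ½{B†B, h}. -/
def lindbladTB (κ : ℝ) (g : ℝ → ℝ) (h : (ℝ → ℝ → ℂ) → (ℝ → ℝ → ℂ)) :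
    (ℝ → ℝ → ℂ) → (ℝ → ℝ → ℂ) :=
  fun ψ =>
    jumpBdag κ g (h (jumpB κ g ψ))
      - (1/2 : ℂ) • (jumpBdag κ g (jumpB κ g (h ψ)) + h (jumpBdag κ g (jumpB κ g ψ)))

open Complex

-- The left side is `𝓛ᵀ[c ∂]φ` at `t` when `B†` and `B` multiply by `a` and `b`;
-- `lindbladTB κ g (momOpᵢ ℏ) ψ x y` unfolds to it definitionally.
theorem dissipator_deriv_eq {a b φ : ℝ → ℂ} {t : ℝ} (c : ℂ) (ha : DifferentiableAt ℝ a t)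
    (hb : DifferentiableAt ℝ b t) (hφ : DifferentiableAt ℝ φ t) :
    a t * (c * deriv (fun s => b s * φ s) t)
        - 1 / 2 * (a t * (b t * (c * deriv φ t)) + c * deriv (fun s => a s * (b s * φ s)) t)
      = c / 2 * (a t * deriv b t - deriv a t * b t) * φ t := by
  rw [deriv_fun_mul ha (hb.fun_mul hφ), deriv_fun_mul hb hφ]
  ring

theorem hasDerivAt_cexp_mul_ofReal (c : ℂ) (x : ℝ) :
    HasDerivAt (fun t : ℝ => exp (c * t)) (c * exp (c * x)) x := by
  simpa [mul_comm] using ((hasDerivAt_id x).ofReal_comp.const_mul c).cexp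

theorem exp_I_mul_mul_exp_neg_I_mul (κ x : ℝ) : exp (I * κ * x) * exp (-I * κ * x) = 1 := by
  rw [← exp_add, show I * κ * x + -I * κ * x = 0 by ring, exp_zero]

theorem lindbladTB_posOp2 (κ : ℝ) (g : ℝ → ℝ) (ψ : ℝ → ℝ → ℂ) :
    lindbladTB κ g posOp2 ψ = 0 := by
  funext x y
  simp only [lindbladTB, jumpB, jumpBdag, posOp2, Pi.sub_apply, Pi.smul_apply, Pi.add_apply,
    smul_eq_mul, Pi.zero_apply]
  ring

theorem lindbladTB_momOp2 (ℏ κ : ℝ) {g : ℝ → ℝ} (hg : Differentiable ℝ g) {ψ : ℝ → ℝ → ℂ}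
    (hψ : ∀ x, Differentiable ℝ (fun y => ψ x y)) (x y : ℝ) :
    lindbladTB κ g (momOp2 ℏ) ψ x y = 0 := by
  have hgC (e : ℂ) : HasDerivAt (fun t : ℝ => e * g t) (e * deriv g y) y :=
    (hg y).hasDerivAt.ofReal_comp.const_mul e
  have key := dissipator_deriv_eq (-I * ℏ) (hgC (exp (I * κ * x))).differentiableAt
    (hgC (exp (-I * κ * x))).differentiableAt (hψ x y)
  rw [(hgC _).deriv, (hgC _).deriv] at key
  refine key.trans ?_
  ring

theorem lindbladTB_momOp1 (ℏ κ : ℝ) (g : ℝ → ℝ) {ψ : ℝ → ℝ → ℂ}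
    (hψ : ∀ y, Differentiable ℝ (fun x => ψ x y)) (x y : ℝ) :
    lindbladTB κ g (momOp1 ℏ) ψ x y = ((-(ℏ * κ) * (g y) ^ 2 : ℝ) : ℂ) * ψ x y := by
  have hphase (e : ℂ) : HasDerivAt (fun t : ℝ => exp (e * t) * g y) (e * exp (e * x) * g y) x :=
    (hasDerivAt_cexp_mul_ofReal e x).mul_const _
  have key := dissipator_deriv_eq (-I * ℏ) (hphase (I * κ)).differentiableAt
    (hphase (-I * κ)).differentiableAt (hψ y x)
  rw [(hphase _).deriv, (hphase _).deriv] at key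
  refine key.trans ?_
  push_cast
  linear_combination (ℏ * κ * g y ^ 2 * ψ x y * exp (I * κ * x) * exp (-I * κ * x)) * I_mul_I
    - ℏ * κ * g y ^ 2 * ψ x y * exp_I_mul_mul_exp_neg_I_mul κ x

theorem nonreciprocal_coupling_general (ℏ κ : ℝ) (g : ℝ → ℝ)
    (hg : Differentiable ℝ g) :
    ∀ ψ : ℝ → ℝ → ℂ,
      (∀ y, Differentiable ℝ (fun x => ψ x y)) →
      (∀ x, Differentiable ℝ (fun y => ψ x y)) →
      ∀ x y : ℝ,
        -- (i) the target's first moments are unaffected: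
        lindbladTB κ g posOp2 ψ x y = 0 ∧
        lindbladTB κ g (momOp2 ℏ) ψ x y = 0 ∧
        -- (ii) the controller feels the statistical force −ℏκ g(x̂₂)²:
        lindbladTB κ g (momOp1 ℏ) ψ x y = ((-(ℏ * κ) * (g y) ^ 2 : ℝ) : ℂ) * ψ x y :=
  fun ψ hψ₁ hψ₂ x y =>
    ⟨congrFun (congrFun (lindbladTB_posOp2 κ g ψ) x) y,
      lindbladTB_momOp2 ℏ κ hg hψ₂ x y, lindbladTB_momOp1 ℏ κ g hψ₁ x y⟩

theorem nonreciprocal_coupling (ℏ κ : ℝ) (hℏ : 0 < ℏ) (g : ℝ → ℝ)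
    (hg : Differentiable ℝ g) (hgb : ∃ M : ℝ, ∀ y, |g y| ≤ M) :
    ∀ ψ : ℝ → ℝ → ℂ,
      (∀ y, Differentiable ℝ (fun x => ψ x y)) →
      (∀ x, Differentiable ℝ (fun y => ψ x y)) →
      ∀ x y : ℝ,
        -- (i) the target's first moments are unaffected:
        lindbladTB κ g posOp2 ψ x y = 0 ∧
        lindbladTB κ g (momOp2 ℏ) ψ x y = 0 ∧
        -- (ii) the controller feels the statistical force −ℏκ g(x̂₂)²:
        lindbladTB κ g (momOp1 ℏ) ψ x y = ((-(ℏ * κ) * (g y) ^ 2 : ℝ) : ℂ) * ψ x y :=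
  nonreciprocal_coupling_general ℏ κ g hg

end
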